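/- arXiv:2507.02482 — 2 statements merged into one kernel-verified Lean document; each statement's English description precedes it below -/
import Mathlib

section
/- Let m ≥ 1 and c ≥ 0, let R : ℝ → (real m×m matrices) be continuous, and let U : ℝ → (real m×m matrices) be differentiable with U'(t) + U(t)² + R(t) = 0 for all t ≥ 0, such that for every t ≥ 0 the matrix U(t) is positive semidefinite and c·I − U(t) is positive semidefinite. Then limsup_{t→∞} (1/t)∫₀ᵗ tr(U(s)²) ds = limsup_{t→∞} (−(1/t)∫₀ᵗ tr(R(s)) ds), and liminf_{t→∞} (1/t)∫₀ᵗ tr(U(s)²) ds = liminf_{t→∞} (−(1/t)∫₀ᵗ tr(R(s)) ds). -/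
/-!
Taking traces in the Riccati equation and integrating over `[0, t]` gives
`(1/t) ∫₀ᵗ tr (U²) = -(1/t) ∫₀ᵗ tr R - (tr U(t) - tr U(0)) / t`.
Since `0 ≤ U ≤ c • 1`, both `tr U` and `tr (U²) ≤ c · tr U` are bounded, so the correction term
tends to `0` and the average of `tr (U²)` is bounded; adding a function tending to `0` to a
bounded function changes neither its `limsup` nor its `liminf`.
-/

open MeasureTheory intervalIntegral Filter Topology Set

namespace Filter

variable {ι α : Type*} [AddCommGroup α] [ConditionallyCompleteLinearOrder α] [DenselyOrdered α]
  [AddLeftMono α] [TopologicalSpace α] [OrderTopology α] {f : Filter ι} [f.NeBot] {u w : ι → α}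

lemma limsup_add_of_tendsto_zero (hu : IsBoundedUnder (· ≤ ·) f u)
    (hu' : IsBoundedUnder (· ≥ ·) f u) (hw : Tendsto w f (𝓝 0)) :
    limsup (u + w) f = limsup u f := by
  refine le_antisymm ?_ ?_
  · simpa [hw.limsup_eq] using limsup_add_le hu' hu hw.isBoundedUnder_ge.isCoboundedUnder_le
      hw.isBoundedUnder_le
  · simpa [hw.liminf_eq] using le_limsup_add hu hu'.isCoboundedUnder_le hw.isBoundedUnder_le
      hw.isBoundedUnder_ge

lemma liminf_add_of_tendsto_zero (hu : IsBoundedUnder (· ≤ ·) f u)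
    (hu' : IsBoundedUnder (· ≥ ·) f u) (hw : Tendsto w f (𝓝 0)) :
    liminf (u + w) f = liminf u f := by
  refine le_antisymm ?_ ?_
  · simpa [add_comm u, hw.limsup_eq] using liminf_add_le hw.isBoundedUnder_ge hw.isBoundedUnder_le
      hu' hu.isCoboundedUnder_ge
  · simpa [hw.liminf_eq] using le_liminf_add hu' hu hw.isBoundedUnder_ge
      hw.isBoundedUnder_le.isCoboundedUnder_ge

end Filter

namespace Matrix

open scoped MatrixOrder ComplexOrder

variable {n 𝕜 : Type*} [Fintype n] [DecidableEq n] [RCLike 𝕜] {A B : Matrix n n 𝕜}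

lemma PosSemidef.trace_mul_nonneg (hA : A.PosSemidef) (hB : B.PosSemidef) :
    0 ≤ (A * B).trace := by
  -- `tr (A B) = tr (√A B √A)`
  have hsqrt : (CFC.sqrt A)ᴴ = CFC.sqrt A := (CFC.sqrt_nonneg A).isSelfAdjoint
  rw [← CFC.sqrt_mul_sqrt_self A hA.nonneg, mul_assoc, trace_mul_comm, mul_assoc, ← mul_assoc]
  simpa [hsqrt] using (hB.conjTranspose_mul_mul_same (CFC.sqrt A)).trace_nonneg

lemma PosSemidef.trace_mul_self_le {c : ℝ} (hA : A.PosSemidef) (hcA : (c • 1 - A).PosSemidef) :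
    (A * A).trace ≤ c * A.trace := by
  have := hA.trace_mul_nonneg hcA
  rw [mul_sub, trace_sub, mul_smul_comm, mul_one, trace_smul] at this
  simpa [RCLike.real_smul_eq_coe_mul, sub_nonneg] using this

lemma trace_le_card_mul_of_posSemidef_sub {c : ℝ} (hcA : (c • 1 - A).PosSemidef) :
    A.trace ≤ Fintype.card n * c := by
  have := hcA.trace_nonneg
  simpa [trace_sub, trace_smul, sub_nonneg, RCLike.real_smul_eq_coe_mul, mul_comm] using this

end Matrix

lemma Matrix.hasDerivAt_trace {n 𝕜 F : Type*} [Fintype n] [NontriviallyNormedField 𝕜]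
    [NormedAddCommGroup F] [NormedSpace 𝕜 F] {U : 𝕜 → Matrix n n F} {U' : Matrix n n F} {t : 𝕜}
    (hU : ∀ i, HasDerivAt (fun τ => U τ i i) (U' i i) t) :
    HasDerivAt (fun τ => (U τ).trace) U'.trace t := by
  simpa [Matrix.trace, Matrix.diag] using HasDerivAt.fun_sum fun i _ => hU i

lemma integral_trace_mul_self_eq_of_riccati {n : Type*} [Fintype n] {R U U' : ℝ → Matrix n n ℝ}
    {a b : ℝ} (hR : Continuous R) (hU : ∀ t i j, HasDerivAt (fun τ => U τ i j) (U' t i j) t)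
    (hric : ∀ t ∈ uIcc a b, U' t + U t * U t + R t = 0) :
    ∫ s in a..b, (U s * U s).trace = -(∫ s in a..b, (R s).trace) - ((U b).trace - (U a).trace) := by
  have hUc : Continuous U := continuous_matrix fun i j =>
    continuous_iff_continuousAt.2 fun t => (hU t i j).continuousAt
  have hUUc : Continuous fun s => (U s * U s).trace := (hUc.matrix_mul hUc).matrix_trace
  have hRc : Continuous fun s => (R s).trace := hR.matrix_trace
  have hderiv : ∀ t ∈ uIcc a b,
      HasDerivAt (fun τ => (U τ).trace) (-((U t * U t).trace + (R t).trace)) t := fun t ht => by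
    rw [← Matrix.trace_add, ← Matrix.trace_neg,
      neg_eq_of_add_eq_zero_left ((add_assoc _ _ _).symm.trans (hric t ht))]
    exact Matrix.hasDerivAt_trace fun i => hU t i i
  have := integral_eq_sub_of_hasDerivAt hderiv ((hUUc.add hRc).neg.intervalIntegrable a b)
  rw [intervalIntegral.integral_neg, integral_add (hUUc.intervalIntegrable a b)
    (hRc.intervalIntegrable a b)] at this
  linear_combination -this

lemma abs_one_div_mul_integral_le {φ : ℝ → ℝ} {C t : ℝ} (ht : 0 < t)
    (hφ : ∀ s ∈ Ioc 0 t, |φ s| ≤ C) :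
    |(1 / t) * ∫ s in (0:ℝ)..t, φ s| ≤ C := by
  have := intervalIntegral.norm_integral_le_of_norm_le_const (f := φ) (by rwa [uIoc_of_le ht.le])
  rw [Real.norm_eq_abs, sub_zero, abs_of_pos ht] at this
  rw [abs_mul, abs_of_pos (one_div_pos.2 ht)]
  calc 1 / t * |∫ s in (0:ℝ)..t, φ s| ≤ 1 / t * (C * t) := by gcongr
    _ = C := by field_simp

theorem limsup_liminf_avg_trace_sq_eq_general (m : ℕ) (c : ℝ) (hc : 0 ≤ c)
    (R U U' : ℝ → Matrix (Fin m) (Fin m) ℝ)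
    (hR : Continuous R)
    (hU : ∀ t, ∀ i j, HasDerivAt (fun τ => U τ i j) (U' t i j) t)
    (hric : ∀ t, 0 ≤ t → U' t + U t * U t + R t = 0)
    (hpsd : ∀ t, 0 ≤ t → (U t).PosSemidef)
    (hle : ∀ t, 0 ≤ t → (c • (1 : Matrix (Fin m) (Fin m) ℝ) - U t).PosSemidef) :
    limsup (fun t : ℝ => (1 / t) * ∫ s in (0:ℝ)..t, (U s * U s).trace) atTop
      = limsup (fun t : ℝ => -((1 / t) * ∫ s in (0:ℝ)..t, (R s).trace)) atTop ∧
    liminf (fun t : ℝ => (1 / t) * ∫ s in (0:ℝ)..t, (U s * U s).trace) atTop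
      = liminf (fun t : ℝ => -((1 / t) * ∫ s in (0:ℝ)..t, (R s).trace)) atTop := by
  have htr : ∀ t, 0 ≤ t → 0 ≤ (U t).trace ∧ (U t).trace ≤ m * c := fun t ht =>
    ⟨(hpsd t ht).trace_nonneg, by simpa using Matrix.trace_le_card_mul_of_posSemidef_sub (hle t ht)⟩
  have htr_sq : ∀ s, 0 ≤ s → |(U s * U s).trace| ≤ m * c * c := fun s hs => by
    rw [abs_of_nonneg ((hpsd s hs).trace_mul_nonneg (hpsd s hs)), mul_comm _ c]
    exact ((hpsd s hs).trace_mul_self_le (hle s hs)).trans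
      (mul_le_mul_of_nonneg_left (htr s hs).2 hc)
  set f := fun t : ℝ => (1 / t) * ∫ s in (0:ℝ)..t, (U s * U s).trace
  set w := fun t : ℝ => ((U t).trace - (U 0).trace) / t
  have hf : IsBoundedUnder (· ≤ ·) atTop fun t => |f t| := isBoundedUnder_of_eventually_le <|
    (eventually_gt_atTop 0).mono fun t ht =>
      abs_one_div_mul_integral_le ht fun s hs => htr_sq s hs.1.le
  obtain ⟨hf_le, hf_ge⟩ := isBoundedUnder_le_abs.1 hf
  have hw : Tendsto w atTop (𝓝 0) := by
    refine tendsto_bdd_div_atTop_nhds_zero (b := -(m * c)) (B := m * c) ?_ ?_ tendsto_id <;>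
      filter_upwards [eventually_ge_atTop 0] with t ht <;>
      linarith [htr t ht, htr 0 le_rfl]
  have hfw : (fun t : ℝ => -((1 / t) * ∫ s in (0:ℝ)..t, (R s).trace)) =ᶠ[atTop] f + w := by
    filter_upwards [eventually_gt_atTop 0] with t ht
    have hriccati := integral_trace_mul_self_eq_of_riccati (a := 0) (b := t) hR hU fun s hs =>
      hric s (by rw [uIcc_of_le ht.le] at hs; exact hs.1)
    simp only [f, w, Pi.add_apply, hriccati]
    field_simp
    ring
  exact ⟨((limsup_congr hfw).trans (limsup_add_of_tendsto_zero hf_le hf_ge hw)).symm,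
    ((liminf_congr hfw).trans (liminf_add_of_tendsto_zero hf_le hf_ge hw)).symm⟩

/-- For a bounded Riccati solution `0 ≤ U(t) ≤ c • I` of `U' + U² + R = 0`, the upper and
lower asymptotic averages of `tr (U²)` coincide with those of `-tr R`. -/
theorem limsup_liminf_avg_trace_sq_eq (m : ℕ) (hm : 1 ≤ m) (c : ℝ) (hc : 0 ≤ c)
    (R U U' : ℝ → Matrix (Fin m) (Fin m) ℝ)
    (hR : Continuous R)
    (hU : ∀ t, ∀ i j, HasDerivAt (fun τ => U τ i j) (U' t i j) t)
    (hric : ∀ t, 0 ≤ t → U' t + U t * U t + R t = 0)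
    (hpsd : ∀ t, 0 ≤ t → (U t).PosSemidef)
    (hle : ∀ t, 0 ≤ t → (c • (1 : Matrix (Fin m) (Fin m) ℝ) - U t).PosSemidef) :
    limsup (fun t : ℝ => (1 / t) * ∫ s in (0:ℝ)..t, (U s * U s).trace) atTop
      = limsup (fun t : ℝ => -((1 / t) * ∫ s in (0:ℝ)..t, (R s).trace)) atTop ∧
    liminf (fun t : ℝ => (1 / t) * ∫ s in (0:ℝ)..t, (U s * U s).trace) atTop
      = liminf (fun t : ℝ => -((1 / t) * ∫ s in (0:ℝ)..t, (R s).trace)) atTop :=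
  limsup_liminf_avg_trace_sq_eq_general m c hc R U U' hR hU hric hpsd hle
end

section
/- Let m ≥ 1, let (X, μ) be a probability space, and let U : X → (real m×m matrices) be measurable such that U(x) is symmetric for every x, and such that x ↦ tr(U(x)) and x ↦ tr(U(x)·U(x)) are integrable with respect to μ. If ∫ tr(U(x)) dμ(x) = √( m · ∫ tr(U(x)·U(x)) dμ(x) ), then for μ-almost every x one has U(x) = λ·I, where λ = (∫ tr(U) dμ)/m; in particular tr(U(x)) is μ-almost everywhere equal to the constant ∫ tr(U) dμ. -/
/-! Pointwise, `m tr(U²) - (tr U)² = m tr(U₀²) ≥ 0`, where `U₀ = U - (tr U / m) • 1` is the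
trace-free part of `U`; integrating and using Jensen, `(∫ tr U)² ≤ ∫ (tr U)² ≤ m ∫ tr(U²)`.
Equality of the two ends forces `tr U` to have zero variance and `U₀ = 0` almost everywhere. -/

open MeasureTheory

namespace Matrix

lemma IsSymm.conjTranspose_eq {n : Type*} {A : Matrix n n ℝ} (hA : A.IsSymm) : Aᴴ = A := by
  rw [conjTranspose_eq_transpose_of_trivial, hA.eq]

variable {n : Type*} [Fintype n] {A : Matrix n n ℝ}

lemma IsSymm.trace_mul_self_nonneg (hA : A.IsSymm) : 0 ≤ (A * A).trace := by
  simpa only [hA.conjTranspose_eq] using (posSemidef_conjTranspose_mul_self A).trace_nonneg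

lemma IsSymm.trace_mul_self_eq_zero_iff (hA : A.IsSymm) : (A * A).trace = 0 ↔ A = 0 := by
  simpa only [hA.conjTranspose_eq] using trace_conjTranspose_mul_self_eq_zero_iff (A := A)

variable [DecidableEq n]

lemma trace_sub_smul_one_mul_self (A : Matrix n n ℝ) (c : ℝ) :
    ((A - c • 1) * (A - c • 1)).trace =
      (A * A).trace - 2 * c * A.trace + c ^ 2 * Fintype.card n := by
  simp only [sub_mul, mul_sub, Matrix.smul_mul, Matrix.mul_smul, Matrix.one_mul, Matrix.mul_one,
    smul_smul, trace_sub, trace_smul, trace_one, smul_eq_mul]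
  ring

lemma card_mul_trace_mul_self_eq [Nonempty n] (A : Matrix n n ℝ) :
    Fintype.card n * (A * A).trace = A.trace ^ 2 +
      Fintype.card n * ((A - (A.trace / Fintype.card n) • 1) *
        (A - (A.trace / Fintype.card n) • 1)).trace := by
  have hcard : (Fintype.card n : ℝ) ≠ 0 := by positivity
  rw [trace_sub_smul_one_mul_self]
  field_simp
  ring

lemma IsSymm.sq_trace_le_card_mul_trace_mul_self (hA : A.IsSymm) :
    A.trace ^ 2 ≤ Fintype.card n * (A * A).trace := by
  rcases isEmpty_or_nonempty n with hn | hn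
  · simp [trace]
  rw [card_mul_trace_mul_self_eq]
  have hfree : (A - (A.trace / Fintype.card n) • 1).IsSymm := hA.sub (isSymm_one.smul _)
  exact le_add_of_nonneg_right (by have := hfree.trace_mul_self_nonneg; positivity)

lemma IsSymm.eq_smul_one_of_sq_trace_eq (hA : A.IsSymm)
    (h : A.trace ^ 2 = Fintype.card n * (A * A).trace) :
    A = (A.trace / Fintype.card n) • 1 := by
  rcases isEmpty_or_nonempty n with hn | hn
  · exact Subsingleton.elim _ _
  have hfree : (A - (A.trace / Fintype.card n) • 1).IsSymm := hA.sub (isSymm_one.smul _)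
  have hcard : (Fintype.card n : ℝ) ≠ 0 := by positivity
  rw [card_mul_trace_mul_self_eq, left_eq_add, mul_eq_zero, or_iff_right hcard,
    hfree.trace_mul_self_eq_zero_iff, sub_eq_zero] at h
  exact h

end Matrix

section

variable {X : Type*} [MeasurableSpace X] {μ : Measure X} [IsProbabilityMeasure μ]

lemma ae_eq_integral_and_sq_ae_eq_of_integral_le_sq {f g : X → ℝ} (hf : Integrable f μ)
    (hg : Integrable g μ) (hfg : ∀ᵐ x ∂μ, f x ^ 2 ≤ g x)
    (h : ∫ x, g x ∂μ ≤ (∫ x, f x ∂μ) ^ 2) :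
    (∀ᵐ x ∂μ, f x = ∫ y, f y ∂μ) ∧ (fun x => f x ^ 2) =ᵐ[μ] g := by
  have hf2 : MemLp f 2 μ := (memLp_two_iff_integrable_sq hf.aestronglyMeasurable).2 <|
    hg.mono' (hf.aestronglyMeasurable.pow 2) <| hfg.mono fun x hx => by
      rwa [Real.norm_of_nonneg (sq_nonneg _)]
  have hsq_le : ∫ x, f x ^ 2 ∂μ ≤ ∫ x, g x ∂μ := integral_mono_ae hf2.integrable_sq hg hfg
  have hvar : ProbabilityTheory.variance f μ = ∫ x, f x ^ 2 ∂μ - (∫ x, f x ∂μ) ^ 2 :=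
    ProbabilityTheory.variance_eq_sub hf2
  have hvar_nonneg := ProbabilityTheory.variance_nonneg f μ
  refine ⟨ProbabilityTheory.ae_eq_integral_of_variance_eq_zero hf2 (by linarith), ?_⟩
  exact (integral_eq_iff_of_ae_le hf2.integrable_sq hg hfg).1 (by linarith)

end

theorem ae_eq_smul_one_of_integral_trace_eq_general (m : ℕ)
    {X : Type*} [MeasurableSpace X] (μ : Measure X) [IsProbabilityMeasure μ]
    (U : X → Matrix (Fin m) (Fin m) ℝ)
    (hsymm : ∀ x, (U x).IsSymm)
    (hint1 : Integrable (fun x => (U x).trace) μ)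
    (hint2 : Integrable (fun x => (U x * U x).trace) μ)
    (heq : ∫ x, (U x).trace ∂μ = Real.sqrt ((m : ℝ) * ∫ x, (U x * U x).trace ∂μ)) :
    (∀ᵐ x ∂μ, U x = ((∫ y, (U y).trace ∂μ) / (m : ℝ)) • (1 : Matrix (Fin m) (Fin m) ℝ)) ∧
    (∀ᵐ x ∂μ, (U x).trace = ∫ y, (U y).trace ∂μ) := by
  have hpointwise (x : X) : (U x).trace ^ 2 ≤ m * (U x * U x).trace := by
    simpa using (hsymm x).sq_trace_le_card_mul_trace_mul_self
  have hintegral : ∫ x, m * (U x * U x).trace ∂μ ≤ (∫ x, (U x).trace ∂μ) ^ 2 := by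
    have : 0 ≤ ∫ x, (U x * U x).trace ∂μ :=
      integral_nonneg fun x => (hsymm x).trace_mul_self_nonneg
    rw [integral_const_mul, heq, Real.sq_sqrt (by positivity)]
  obtain ⟨htrace, hsq⟩ := ae_eq_integral_and_sq_ae_eq_of_integral_le_sq hint1
    (hint2.const_mul m) (ae_of_all _ hpointwise) hintegral
  refine ⟨?_, htrace⟩
  filter_upwards [htrace, hsq] with x hx hsqx
  rw [← hx]
  simpa using (hsymm x).eq_smul_one_of_sq_trace_eq (by simpa using hsqx)

/-- Measure-theoretic equality case of the Cauchy–Schwarz trace inequality: if `U` is a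
measurable family of symmetric `m × m` matrices over a probability space with
`∫ tr U dμ = √(m ∫ tr (U²) dμ)`, then `U = ((∫ tr U dμ)/m) • I` almost everywhere; in
particular `tr U` is a.e. equal to the constant `∫ tr U dμ`. -/
theorem ae_eq_smul_one_of_integral_trace_eq (m : ℕ) (hm : 1 ≤ m)
    {X : Type*} [MeasurableSpace X] (μ : Measure X) [IsProbabilityMeasure μ]
    (U : X → Matrix (Fin m) (Fin m) ℝ)
    (hmeas : ∀ i j, Measurable fun x => U x i j)
    (hsymm : ∀ x, (U x).IsSymm)
    (hint1 : Integrable (fun x => (U x).trace) μ)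
    (hint2 : Integrable (fun x => (U x * U x).trace) μ)
    (heq : ∫ x, (U x).trace ∂μ = Real.sqrt ((m : ℝ) * ∫ x, (U x * U x).trace ∂μ)) :
    (∀ᵐ x ∂μ, U x = ((∫ y, (U y).trace ∂μ) / (m : ℝ)) • (1 : Matrix (Fin m) (Fin m) ℝ)) ∧
    (∀ᵐ x ∂μ, (U x).trace = ∫ y, (U y).trace ∂μ) :=
  ae_eq_smul_one_of_integral_trace_eq_general m μ U hsymm hint1 hint2 heq
end
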